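/- Let V be a 4-dimensional and U a 3-dimensional vector space over a field of characteristic different from 2, and let A in V tensor Sym^2(U) be a symmetrization of the cubic symmetroid Gamma_A, of one of the types (1)-(6) (Gamma_A irreducible, or the union of a smooth quadric with a tangent plane). Then the rational maps satisfy q_A = gamma_A composed with c_A, where q_A : P(U) --> P(V^dual) is the map defined by the quadrics of A, gamma_A : Gamma_A --> P(V^dual) is the Gauss map of Gamma_A, and c_A : P(U) --> P(V) is the adjugation map given by the adjugate of the 3x4 matrix A_U. -/

import Mathlib

/-!
Common geometric definitions.
-/

noncomputable section

open MvPolynomial Matrix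

/-- The projective space `ℙ³` over `k`, modelled on `k⁴`. -/
abbrev Proj3 (k : Type*) [Field k] := Projectivization k (Fin 4 → k)

/-- The projective plane `ℙ²` over `k`, modelled on `k³`. -/
abbrev Proj2 (k : Type*) [Field k] := Projectivization k (Fin 3 → k)

/-- The linear form with coefficient vector `c`, as a multivariate polynomial. -/
def linPoly {R : Type*} [CommSemiring R] {n : ℕ} (c : Fin n → R) : MvPolynomial (Fin n) R :=
  ∑ i, C (c i) * X i

/-- The gradient vector of a multivariate polynomial at a point. -/
def gradVec {R : Type*} [CommSemiring R] {n : ℕ} (f : MvPolynomial (Fin n) R)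
    (v : Fin n → R) : Fin n → R :=
  fun j => eval v (pderiv j f)

/-- A point of `ℙ³` is a singular point of the surface `f = 0`
(for `f` homogeneous this does not depend on the chosen representative). -/
def IsSingPt {k : Type*} [Field k] (f : MvPolynomial (Fin 4) k) (x : Proj3 k) : Prop :=
  eval x.rep f = 0 ∧ ∀ j, eval x.rep (pderiv j f) = 0

/-- The quadratic form, as a polynomial, of a `4 × 4` matrix. -/
def quadPoly {R : Type*} [CommSemiring R] (A : Matrix (Fin 4) (Fin 4) R) :
    MvPolynomial (Fin 4) R :=
  ∑ i, ∑ j, C (A i j) * X i * X j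

/-- The quadric surface in `ℙ³` cut out by a (symmetric) `4 × 4` matrix. -/
def quadricSet {k : Type*} [Field k] (A : Matrix (Fin 4) (Fin 4) k) : Set (Proj3 k) :=
  {x | x.rep ⬝ᵥ A.mulVec x.rep = 0}

/-- A symmetric `3 × 3` matrix of linear forms on `k⁴`; equivalently, a tensor
`A ∈ V ⊗ Sym² U` with `dim V = 4`, `dim U = 3`.  This is the data of a symmetrization
of a cubic symmetroid in `ℙ³ = ℙ(V)`. -/
structure SymMat (k : Type*) [Field k] : Type _ where
  entry : Fin 3 → Fin 3 → Fin 4 → k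
  symm : ∀ a b, entry a b = entry b a

namespace SymMat

variable {k : Type*} [Field k]

/-- Evaluating the matrix of linear forms at `v ∈ k⁴` gives a symmetric `3 × 3` matrix,
i.e. a conic on `ℙ²`.  This is the contraction `A_V : V∨ → Sym² U`. -/
def evalAt (M : SymMat k) (v : Fin 4 → k) : Matrix (Fin 3) (Fin 3) k :=
  Matrix.of fun a b => ∑ i, M.entry a b i * v i

/-- Non-degeneracy of a symmetrization: the contraction `A_V : V∨ → Sym² U` is injective. -/
def Nondeg (M : SymMat k) : Prop :=
  Function.Injective fun v : Fin 4 → k => M.evalAt v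

/-- The determinant of the symmetric matrix of linear forms: a cubic form on `k⁴`. -/
def detPoly (M : SymMat k) : MvPolynomial (Fin 4) k :=
  (Matrix.of fun a b => linPoly (M.entry a b)).det

/-- The cubic symmetroid surface `Γ_A ⊆ ℙ³` cut out by `det A_V = 0`. -/
def cubicLocus (M : SymMat k) : Set (Proj3 k) :=
  {x | (M.evalAt x.rep).det = 0}

/-- The four quadrics `q₀, …, q₃` of the symmetrization, evaluated at `z ∈ k³`.
The symmetrization map `𝔮_A : ℙ² → ℙ̂³` is `[z] ↦ [quads M z]`. -/
def quads (M : SymMat k) (z : Fin 3 → k) : Fin 4 → k :=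
  fun i => ∑ a, ∑ b, z a * M.entry a b i * z b

/-- The four quadrics of the symmetrization, as polynomials in three variables. -/
def quadsPoly (M : SymMat k) (i : Fin 4) : MvPolynomial (Fin 3) k :=
  ∑ a, ∑ b, C (M.entry a b i) * X a * X b

end SymMat

/-- The pullback `𝔮_A⁻¹(Q̂)` of the dual quadric of `A` under the symmetrization map of `M`:
the dual quadric (resp. the plane dual to the vertex, when `A` is a cone)
is cut out in the dual `ℙ³` by the adjugate matrix of `A`. -/
def symPullbackQuadric {k : Type*} [Field k] (M : SymMat k)
    (A : Matrix (Fin 4) (Fin 4) k) : Set (Proj2 k) :=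
  {z | (M.quads z.rep) ⬝ᵥ (A.adjugate.mulVec (M.quads z.rep)) = 0}



/-- The `3 × 4` matrix `A_U(z)` of the contraction `A_U : U∨ → V ⊗ U`, evaluated at
`z ∈ k³`; its kernel describes the conics of the symmetrization singular at `[z]`. -/
def SymMat.sideMat {k : Type} [Field k] (M : SymMat k) (z : Fin 3 → k) :
    Matrix (Fin 3) (Fin 4) k :=
  Matrix.of fun a i => ∑ b, M.entry a b i * z b

/-- The adjugate of the `3 × 4` matrix `A_U`: the vector of its four signed maximal
minors, whose entries are cubic forms in `z`.  The adjugation map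
`𝔠_A : ℙ² --> ℙ³` is `[z] ↦ [adjVec M z]`. -/
def SymMat.adjVec {k : Type} [Field k] (M : SymMat k) (z : Fin 3 → k) : Fin 4 → k :=
  fun i => (-1 : k) ^ (i : ℕ) * ((M.sideMat z).submatrix id i.succAbove).det

/-- The cubic surface `{F = 0}` is the union of a *smooth* quadric and a plane *tangent*
to it (type (6) in the classification of cubic symmetroids). -/
def IsQuadricPlusTangentPlane {K : Type*} [Field K] (F : MvPolynomial (Fin 4) K) : Prop :=
  ∃ q l : MvPolynomial (Fin 4) K, q.IsHomogeneous 2 ∧ l.IsHomogeneous 1 ∧ F = q * l ∧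
    (∀ v : Fin 4 → K, v ≠ 0 → MvPolynomial.eval v q = 0 → gradVec q v ≠ 0) ∧
    (∃ v : Fin 4 → K, v ≠ 0 ∧ MvPolynomial.eval v q = 0 ∧ MvPolynomial.eval v l = 0 ∧
      ∃ c : K, gradVec q v = c • fun j => MvPolynomial.eval (Pi.single j 1) l)

/-! At `p = 𝔠_A(z)` the symmetric matrix `A_V(p)` kills `z`: indeed `A_V(p) z = A_U(z) p`, and
the vector of signed maximal minors of a `3 × 4` matrix lies in its kernel (Laplace expansion
of a `4 × 4` matrix with a repeated row).  The adjugate of a symmetric matrix with a nonzero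
kernel vector `z` is a multiple `e • z zᵀ`, and by Jacobi's formula `∇(det A_V)(p)` is the
contraction of `adj A_V(p)` with `A`, hence equals `e • (q₀(z), …, q₃(z))`. -/

theorem Matrix.sum_mul_signed_det_submatrix_succAbove {R : Type*} [CommRing R] {n : ℕ}
    (S : Matrix (Fin n) (Fin (n + 1)) R) (a : Fin n) :
    ∑ i, S a i * ((-1) ^ (i : ℕ) * (S.submatrix id i.succAbove).det) = 0 := by
  let T : Matrix (Fin (n + 1)) (Fin (n + 1)) R := of (Fin.cons (S a) S)
  have hT : T.det = 0 := det_zero_of_row_eq (Fin.succ_ne_zero a).symm rfl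
  rw [det_succ_row_zero] at hT
  rw [← hT]
  refine Finset.sum_congr rfl fun i _ => ?_
  change S a i * ((-1) ^ (i : ℕ) * (S.submatrix id i.succAbove).det) =
    (-1) ^ (i : ℕ) * S a i * (S.submatrix id i.succAbove).det
  ring

theorem Matrix.mul_adjugate_apply_eq_of_vecMul_eq_zero {n R : Type*} [Fintype n] [DecidableEq n]
    [CommRing R] {B : Matrix n n R} {z : n → R} (hz : z ᵥ* B = 0) (i a b : n) :
    z a * B.adjugate i b = z b * B.adjugate i a := by
  rcases eq_or_ne a b with rfl | hab
  · rfl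
  simp only [adjugate_apply]
  set e : n → R := Pi.single i 1
  set G := B.updateRow b e
  -- Since `∑ z k • B k = 0`, the combination `∑ z k • G k` only sees the replaced row `b`.
  have hcomb : ∑ k, z k • G k = z b • e + (-z b) • B b := by
    have hG : ∀ k,
        z k • G k = z k • B k + (Pi.single b (z b • (e - B b)) : n → n → R) k := by
      intro k
      rcases eq_or_ne k b with rfl | hkb
      · simp only [G, updateRow_self, Pi.single_eq_same]
        module
      · simp [G, hkb]
    have hzB : ∑ k, z k • B k = 0 := by rw [← hz, vecMul_eq_sum]
    rw [Finset.sum_congr rfl fun k _ => hG k, Finset.sum_add_distrib, hzB, Finset.sum_pi_single']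
    simp only [Finset.mem_univ, if_true, zero_add]
    module
  have hswap : G.updateRow a (B b) = (B.updateRow a e).submatrix (Equiv.swap a b) id := by
    ext r c
    rcases eq_or_ne r a with rfl | hra
    · simp [G, updateRow_ne hab.symm]
    rcases eq_or_ne r b with rfl | hrb
    · simp [G, hra]
    · simp [G, hra, hrb, Equiv.swap_apply_of_ne_of_ne hra hrb]
  have hrep : (G.updateRow a e).det = 0 :=
    det_zero_of_row_eq hab (by simp [G, updateRow_ne hab.symm])
  have hexpand := det_updateRow_sum G a z
  rw [hcomb, det_updateRow_add, det_updateRow_smul, det_updateRow_smul, hrep, hswap,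
    det_permute, Equiv.Perm.sign_swap hab] at hexpand
  simp only [smul_eq_mul, Units.val_neg, Units.val_one, Int.cast_neg, Int.cast_one] at hexpand
  linear_combination -hexpand

theorem Matrix.IsSymm.exists_adjugate_eq_smul_vecMulVec {n K : Type*} [Fintype n]
    [DecidableEq n] [Field K] {B : Matrix n n K} (hB : B.IsSymm) {z : n → K}
    (hz : B *ᵥ z = 0) (hz0 : z ≠ 0) : ∃ e : K, B.adjugate = e • vecMulVec z z := by
  obtain ⟨i, hi⟩ : ∃ i, z i ≠ 0 := Function.ne_iff.mp hz0
  have hzB : z ᵥ* B = 0 := by rw [← mulVec_transpose, hB.eq, hz]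
  refine ⟨B.adjugate i i / z i ^ 2, ?_⟩
  ext a c
  have hac := mul_adjugate_apply_eq_of_vecMul_eq_zero hzB a i c
  have hia := mul_adjugate_apply_eq_of_vecMul_eq_zero hzB i a i
  have hsymm := hB.adjugate.apply i a
  simp only [smul_apply, vecMulVec_apply, smul_eq_mul]
  field_simp
  linear_combination z i * hac + z c * z i * hsymm - z c * hia

theorem eval_linPoly {R : Type*} [CommSemiring R] {n : ℕ} (c v : Fin n → R) :
    eval v (linPoly c) = c ⬝ᵥ v := by
  simp [linPoly, dotProduct]

theorem pderiv_linPoly {R : Type*} [CommSemiring R] {n : ℕ} (c : Fin n → R) (j : Fin n) :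
    pderiv j (linPoly c) = C (c j) := by
  simp [linPoly, pderiv_X, Pi.single_apply]

namespace SymMat

variable {k : Type} [Field k] (M : SymMat k)

theorem isSymm_evalAt (v : Fin 4 → k) : (M.evalAt v).IsSymm :=
  IsSymm.ext fun a b => by simp [evalAt, M.symm a b]

theorem evalAt_mulVec_eq_sideMat_mulVec (v : Fin 4 → k) (z : Fin 3 → k) :
    M.evalAt v *ᵥ z = M.sideMat z *ᵥ v := by
  ext a
  simp only [mulVec, dotProduct, evalAt, sideMat, of_apply, Finset.sum_mul]
  rw [Finset.sum_comm]
  exact Finset.sum_congr rfl fun _ _ => Finset.sum_congr rfl fun _ _ => by ring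

theorem evalAt_adjVec_mulVec_self (z : Fin 3 → k) : M.evalAt (M.adjVec z) *ᵥ z = 0 := by
  rw [evalAt_mulVec_eq_sideMat_mulVec]
  ext a
  exact (M.sideMat z).sum_mul_signed_det_submatrix_succAbove a

/-- Jacobi's formula `∂ⱼ det = tr (adj · ∂ⱼ)` for the symmetroid. -/
theorem gradVec_detPoly (v : Fin 4 → k) (j : Fin 4) :
    gradVec M.detPoly v j = ∑ a, ∑ b, (M.evalAt v).adjugate b a * M.entry a b j := by
  simp only [gradVec, detPoly, det_fin_three, of_apply, map_add, map_sub, Derivation.leibniz,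
    pderiv_linPoly, smul_eq_mul, eval_mul, eval_C, eval_linPoly, adjugate_fin_three,
    Fin.sum_univ_three, evalAt, dotProduct, cons_val', cons_val_zero, cons_val_one, cons_val]
  ring

theorem gradVec_detPoly_eq_smul_quads {v : Fin 4 → k} {z : Fin 3 → k} {e : k}
    (h : (M.evalAt v).adjugate = e • vecMulVec z z) : gradVec M.detPoly v = e • M.quads z := by
  ext j
  simp only [gradVec_detPoly, h, Matrix.smul_apply, vecMulVec_apply, smul_eq_mul, Pi.smul_apply,
    quads, Finset.mul_sum]
  exact Finset.sum_congr rfl fun _ _ => Finset.sum_congr rfl fun _ _ => by ring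

end SymMat

theorem statement15_general (k : Type) [Field k] (M : SymMat k) :
    ∀ z : Fin 3 → k, z ≠ 0 →
      ∀ (hq : M.quads z ≠ 0) (hg : gradVec M.detPoly (M.adjVec z) ≠ 0),
        Projectivization.mk k (M.quads z) hq =
          Projectivization.mk k (gradVec M.detPoly (M.adjVec z)) hg := by
  intro z hz hq hg
  obtain ⟨e, he⟩ := (M.isSymm_evalAt _).exists_adjugate_eq_smul_vecMulVec
    (M.evalAt_adjVec_mulVec_self z) hz
  exact ((Projectivization.mk_eq_mk_iff' k _ _ hg hq).mpr
    ⟨e, (M.gradVec_detPoly_eq_smul_quads he).symm⟩).symm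

/-- Lemma 3.4 of the paper.  Let `V` be 4-dimensional and `U`
3-dimensional over a field of characteristic `≠ 2`, and let `A ∈ V ⊗ Sym² U` (encoded by
the symmetric matrix of linear forms `M`) be a symmetrization of the cubic symmetroid
`Γ_A` of one of the types (1)–(6), i.e. with `Γ_A` irreducible (over an algebraic
closure) or the union of a smooth quadric with a tangent plane.  Then the rational maps
satisfy `𝔮_A = γ_A ∘ 𝔠_A`, where `𝔮_A : ℙ(U) --> ℙ(V∨)`, `[z] ↦ [quads z]` is the map
defined by the quadrics of `A`, `γ_A` is the Gauss map `p ↦ [∇(det A_V)(p)]` of `Γ_A`,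
and `𝔠_A : ℙ(U) --> ℙ(V)`, `[z] ↦ [adjVec z]` is the adjugation map given by the adjugate
of the `3 × 4` matrix `A_U`.  (The equality is asserted at every point where all three
maps are defined.) -/
theorem statement15 (k : Type) [Field k] (hchar : ringChar k ≠ 2)
    (M : SymMat k) (hnd : M.Nondeg)
    (htype :
      Irreducible
        (MvPolynomial.map (algebraMap k (AlgebraicClosure k)) M.detPoly) ∨
      IsQuadricPlusTangentPlane
        (MvPolynomial.map (algebraMap k (AlgebraicClosure k)) M.detPoly)) :
    ∀ z : Fin 3 → k, z ≠ 0 →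
      ∀ (hq : M.quads z ≠ 0) (hg : gradVec M.detPoly (M.adjVec z) ≠ 0),
        Projectivization.mk k (M.quads z) hq =
          Projectivization.mk k (gradVec M.detPoly (M.adjVec z)) hg :=
  statement15_general k M

end
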